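/- Single-step descent inequality for ALI-G under RSI: let ℓ: R^p → R be β-smooth with ℓ(w_⋆) = min ℓ = 0, satisfying ∇ℓ(w)ᵀ(w - w_⋆) ≥ α‖w - w_⋆‖² for all w. For w_t with ∇ℓ(w_t) ≠ 0 and γ_t = min{ℓ(w_t)/‖∇ℓ(w_t)‖², η}, the update w_{t+1} = w_t - γ_t ∇ℓ(w_t) satisfies ‖w_{t+1} - w_⋆‖² ≤ (1 - 2γ_t α + γ_t β/2)·‖w_t - w_⋆‖². -/

import Mathlib

/-!
Since `ℓ` attains its minimum `0` at `w⋆`, the gradient vanishes there, and the descent lemma for a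
`β`-Lipschitz gradient, taken at `w⋆`, gives `ℓ w ≤ β / 2 * ‖w - w⋆‖²`. Expanding the square,
`‖w_{t+1} - w⋆‖² = ‖w_t - w⋆‖² - 2γ ⟪∇ℓ(w_t), w_t - w⋆⟫ + γ (γ ‖∇ℓ(w_t)‖²)`; the RSI bounds the
middle term and the choice of `γ` gives `γ ‖∇ℓ(w_t)‖² ≤ ℓ(w_t) ≤ β / 2 * ‖w_t - w⋆‖²`.
-/

open RealInnerProductSpace

section Gradient

variable {E : Type*} [NormedAddCommGroup E] [InnerProductSpace ℝ E] [CompleteSpace E]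

theorem IsLocalMin.hasGradientAt_eq_zero {f : E → ℝ} {a g : E} (h : IsLocalMin f a)
    (hf : HasGradientAt f g a) : g = 0 := by
  have hdual : InnerProductSpace.toDual ℝ E g = 0 :=
    h.hasFDerivAt_eq_zero (hasGradientAt_iff_hasFDerivAt.1 hf)
  simpa using hdual

theorem HasGradientAt.hasDerivAt_comp_add_smul {f : E → ℝ} {g x d : E} {t : ℝ}
    (hf : HasGradientAt f g (x + t • d)) :
    HasDerivAt (fun s : ℝ => f (x + s • d)) ⟪g, d⟫ t := by
  have hline : HasDerivAt (fun s : ℝ => x + s • d) d t := by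
    simpa using ((hasDerivAt_id t).smul_const d).const_add x
  simpa [InnerProductSpace.toDual_apply_apply, Function.comp_def] using
    (hasGradientAt_iff_hasFDerivAt.1 hf).comp_hasDerivAt t hline

theorem le_add_inner_add_of_lipschitz_gradient {f : E → ℝ} {g : E → E} {L : ℝ}
    (hf : ∀ w, HasGradientAt f (g w) w) (hg : ∀ u v, ‖g u - g v‖ ≤ L * ‖u - v‖) (x y : E) :
    f y ≤ f x + ⟪g x, y - x⟫ + L / 2 * ‖y - x‖ ^ 2 := by
  set d := y - x
  set ψ : ℝ → ℝ := fun t => f (x + t • d) - t * ⟪g x, d⟫ - L / 2 * t ^ 2 * ‖d‖ ^ 2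
  have hψ : ∀ t : ℝ, HasDerivAt ψ (⟪g (x + t • d) - g x, d⟫ - L * t * ‖d‖ ^ 2) t := by
    intro t
    have hquad := ((hasDerivAt_pow 2 t).const_mul (L / 2)).mul_const (‖d‖ ^ 2)
    refine (((hf _).hasDerivAt_comp_add_smul.sub ((hasDerivAt_id t).mul_const ⟪g x, d⟫)).sub
      hquad).congr_deriv ?_
    rw [inner_sub_left]
    ring
  have hψ_anti : AntitoneOn ψ (Set.Icc 0 1) := by
    refine antitoneOn_of_deriv_nonpos (convex_Icc 0 1)
      (fun t _ => (hψ t).continuousAt.continuousWithinAt)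
      (fun t _ => (hψ t).differentiableAt.differentiableWithinAt) fun t ht => ?_
    rw [interior_Icc] at ht
    rw [(hψ t).deriv, sub_nonpos]
    calc ⟪g (x + t • d) - g x, d⟫ ≤ ‖g (x + t • d) - g x‖ * ‖d‖ := real_inner_le_norm _ _
      _ ≤ L * ‖t • d‖ * ‖d‖ := by
          gcongr
          simpa using hg (x + t • d) x
      _ = L * t * ‖d‖ ^ 2 := by rw [norm_smul, Real.norm_of_nonneg ht.1.le]; ring
  have h10 : ψ 1 ≤ ψ 0 := hψ_anti (by simp) (by simp) zero_le_one
  simp only [ψ, d, one_smul, add_sub_cancel, zero_smul, add_zero] at h10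
  linarith

end Gradient

theorem min_div_mul_le {a b c : ℝ} (ha : 0 ≤ a) (hb : 0 ≤ b) : min (a / b) c * b ≤ a := by
  rcases hb.eq_or_lt with rfl | hb
  · simpa using ha
  · calc min (a / b) c * b ≤ a / b * b := by gcongr; exact min_le_left _ _
      _ = a := div_mul_cancel₀ a hb.ne'

theorem alig_single_step_rsi_general
    {p : ℕ} (ℓ : EuclideanSpace ℝ (Fin p) → ℝ)
    (g : EuclideanSpace ℝ (Fin p) → EuclideanSpace ℝ (Fin p))
    (α β η : ℝ) (hη : 0 < η)
    (hgrad : ∀ w, HasGradientAt ℓ (g w) w)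
    (hsmooth : ∀ u v, ‖g u - g v‖ ≤ β * ‖u - v‖)
    (wstar : EuclideanSpace ℝ (Fin p))
    (hmin : ∀ w, 0 ≤ ℓ w) (hws : ℓ wstar = 0)
    (hrsi : ∀ w, ⟪g w, w - wstar⟫ ≥ α * ‖w - wstar‖ ^ 2)
    (wt : EuclideanSpace ℝ (Fin p)) :
    let γ := min (ℓ wt / ‖g wt‖ ^ 2) η
    let wnext := wt - γ • g wt
    ‖wnext - wstar‖ ^ 2 ≤ (1 - 2 * γ * α + γ * β / 2) * ‖wt - wstar‖ ^ 2 := by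
  intro γ wnext
  have hstar : IsLocalMin ℓ wstar := IsMinOn.isLocalMin (fun w _ => hws ▸ hmin w) Filter.univ_mem
  have hg_star : g wstar = 0 := hstar.hasGradientAt_eq_zero (hgrad wstar)
  have hℓ_le : ℓ wt ≤ β / 2 * ‖wt - wstar‖ ^ 2 := by
    simpa [hws, hg_star] using le_add_inner_add_of_lipschitz_gradient hgrad hsmooth wstar wt
  have hγ_nonneg : 0 ≤ γ := le_min (div_nonneg (hmin wt) (sq_nonneg _)) hη.le
  have hγ_step : γ * ‖g wt‖ ^ 2 ≤ ℓ wt := min_div_mul_le (hmin wt) (sq_nonneg _)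
  calc ‖wnext - wstar‖ ^ 2
      = ‖wt - wstar‖ ^ 2 - 2 * γ * ⟪g wt, wt - wstar⟫ + γ * (γ * ‖g wt‖ ^ 2) := by
        rw [show wnext - wstar = (wt - wstar) - γ • g wt from sub_right_comm _ _ _,
          norm_sub_sq_real, real_inner_smul_right, real_inner_comm, norm_smul,
          Real.norm_of_nonneg hγ_nonneg]
        ring
    _ ≤ ‖wt - wstar‖ ^ 2 - 2 * γ * (α * ‖wt - wstar‖ ^ 2) + γ * (β / 2 * ‖wt - wstar‖ ^ 2) := by
        gcongr _ - _ * ?_ + _ * ?_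
        · exact hrsi wt
        · exact hγ_step.trans hℓ_le
    _ = (1 - 2 * γ * α + γ * β / 2) * ‖wt - wstar‖ ^ 2 := by ring

/-- Single-step descent inequality for ALI-G under the RSI:
`‖w_{t+1} - w⋆‖² ≤ (1 - 2γ_t α + γ_t β/2)·‖w_t - w⋆‖²`. -/
theorem alig_single_step_rsi
    {p : ℕ} (ℓ : EuclideanSpace ℝ (Fin p) → ℝ)
    (g : EuclideanSpace ℝ (Fin p) → EuclideanSpace ℝ (Fin p))
    (α β η : ℝ) (hα : 0 < α) (hβ : 0 < β) (hη : 0 < η)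
    (hgrad : ∀ w, HasGradientAt ℓ (g w) w)
    (hsmooth : ∀ u v, ‖g u - g v‖ ≤ β * ‖u - v‖)
    (wstar : EuclideanSpace ℝ (Fin p))
    (hmin : ∀ w, 0 ≤ ℓ w) (hws : ℓ wstar = 0)
    (hrsi : ∀ w, ⟪g w, w - wstar⟫ ≥ α * ‖w - wstar‖ ^ 2)
    (wt : EuclideanSpace ℝ (Fin p)) (hgt : g wt ≠ 0) :
    let γ := min (ℓ wt / ‖g wt‖ ^ 2) η
    let wnext := wt - γ • g wt
    ‖wnext - wstar‖ ^ 2 ≤ (1 - 2 * γ * α + γ * β / 2) * ‖wt - wstar‖ ^ 2 :=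
  alig_single_step_rsi_general ℓ g α β η hη hgrad hsmooth wstar hmin hws hrsi wt
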